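/- Let Γ be a commutative thick weakly distance-regular digraph with relations Γ_ĩ indexed by two-way distances. If for some l > 1 the product set Γ_ĩ^l Γ_j̃ intersects Γ_ĩ^{l-1} Γ_j̃^2 nontrivially, then ĩ = j̃. -/

import Mathlib

/-!
Common framework: commutative thick weakly distance-regular digraphs.
-/

variable {V : Type*}

/-- There is a directed walk of length `n` from `x` to `y`. -/
def HasWalk (adj : V → V → Prop) (x y : V) (n : ℕ) : Prop :=
  ∃ f : ℕ → V, f 0 = x ∧ f n = y ∧ ∀ i < n, adj (f i) (f (i + 1))

/-- Directed distance `∂(x,y)`. -/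
noncomputable def ddist (adj : V → V → Prop) (x y : V) : ℕ :=
  sInf {n | HasWalk adj x y n}

/-- Two-way distance `∂̃(x,y) = (∂(x,y), ∂(y,x))`. -/
noncomputable def tdist (adj : V → V → Prop) (x y : V) : ℕ × ℕ :=
  (ddist adj x y, ddist adj y x)

/-- The pair `i` is an attained two-way distance, i.e. `i ∈ ∂̃(Γ)`. -/
def Attained (adj : V → V → Prop) (i : ℕ × ℕ) : Prop :=
  ∃ x y : V, tdist adj x y = i

/-- Intersection number `p^h_{i,j}`: for attained `h` it is the common cardinality of
`{z | ∂̃(x,z) = i, ∂̃(z,y) = j}` over pairs with `∂̃(x,y) = h` (and `0` otherwise). -/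
noncomputable def pnum (adj : V → V → Prop) (h i j : ℕ × ℕ) : ℕ :=
  sSup {n | ∃ x y : V, tdist adj x y = h ∧
    n = Set.ncard {z : V | tdist adj x z = i ∧ tdist adj z y = j}}

/-- Valency `k_i = |Γ_i(x)|`. -/
noncomputable def kval (adj : V → V → Prop) (i : ℕ × ℕ) : ℕ :=
  pnum adj (0, 0) i i.swap

/-- Adjacency of the subdigraph `Δ_J`: arcs of type `(1, t-1)` for `t ∈ J`. -/
def deltaAdj (adj : V → V → Prop) (J : Set ℕ) (u v : V) : Prop :=
  ∃ t ∈ J, tdist adj u v = (1, t - 1)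

/-- A circuit of length `s`. -/
def IsCircuit (adj : V → V → Prop) (s : ℕ) (f : ℕ → V) : Prop :=
  0 < s ∧ f s = f 0 ∧ ∀ i < s, adj (f i) (f (i + 1))

/-- Strongly connected. -/
def IsStrong (adj : V → V → Prop) : Prop :=
  ∀ x y : V, ∃ n, HasWalk adj x y n

/-- Weakly distance-regular: the intersection numbers are well defined. -/
def IsWDR (adj : V → V → Prop) : Prop :=
  ∀ (i j : ℕ × ℕ) (x y x' y' : V), tdist adj x y = tdist adj x' y' →
    Set.ncard {z : V | tdist adj x z = i ∧ tdist adj z y = j}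
      = Set.ncard {z : V | tdist adj x' z = i ∧ tdist adj z y' = j}

/-- Thick: `p^h_{i,i}, p^h_{i,i*} ∈ {0, k_i}`. -/
def IsThick (adj : V → V → Prop) : Prop :=
  ∀ h i : ℕ × ℕ,
    (pnum adj h i i = 0 ∨ pnum adj h i i = kval adj i) ∧
    (pnum adj h i i.swap = 0 ∨ pnum adj h i i.swap = kval adj i)

/-- A thick weakly distance-regular digraph (as a property of an adjacency relation). -/
def IsWDRThick (adj : V → V → Prop) : Prop :=
  IsStrong adj ∧ IsWDR adj ∧ IsThick adj

/-- A commutative thick weakly distance-regular digraph. -/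
structure CTWDR (V : Type*) [Fintype V] where
  adj : V → V → Prop
  loopless : ∀ v, ¬ adj v v
  strong : IsStrong adj
  wdr : IsWDR adj
  comm : ∀ (i j : ℕ × ℕ) (x y : V),
    Set.ncard {z : V | tdist adj x z = i ∧ tdist adj z y = j}
      = Set.ncard {z : V | tdist adj x z = j ∧ tdist adj z y = i}
  thick : IsThick adj

namespace CTWDR

variable {V : Type*} [Fintype V] (G : CTWDR V)

/-- Product `EF` of two sets of relations (relations identified with two-way distances). -/
def prodS (E F : Set (ℕ × ℕ)) : Set (ℕ × ℕ) :=
  {h | ∃ i ∈ E, ∃ j ∈ F, pnum G.adj h i j ≠ 0}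

/-- Powers `Γ_i^l` (with `Γ_i^0 = {Γ_{(0,0)}}` and `Γ_i^1 = {Γ_i}`). -/
def pow (i : ℕ × ℕ) : ℕ → Set (ℕ × ℕ)
  | 0 => {(0, 0)}
  | 1 => {i}
  | n + 2 => G.prodS (pow i (n + 1)) {i}

/-- The pair `(1, s-1)` is pure: every circuit of length `s` containing an arc of type
`(1, s-1)` consists of arcs of type `(1, s-1)`. -/
def Pure (s : ℕ) : Prop :=
  ∀ f : ℕ → V, IsCircuit G.adj s f →
    (∃ i < s, tdist G.adj (f i) (f (i + 1)) = (1, s - 1)) →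
    ∀ i < s, tdist G.adj (f i) (f (i + 1)) = (1, s - 1)

/-- `(1, s-1)` is mixed. -/
def Mixed (s : ℕ) : Prop := ¬ G.Pure s

/-- Configuration `C(q)` exists. -/
def Cexists (q : ℕ) : Prop :=
  pnum G.adj (1, q - 2) (1, q - 1) (1, q - 1) ≠ 0 ∧ G.Pure (q - 1)

/-- Configuration `D(q)` exists. -/
def Dexists (q : ℕ) : Prop :=
  pnum G.adj (1, q - 1) (1, q - 2) (q - 2, 1) ≠ 0 ∧ G.Pure (q - 1)

/-- A closed set of relations: `Γ_{i*}Γ_j ⊆ F` for all `i, j ∈ F`. -/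
def Closed (F : Set (ℕ × ℕ)) : Prop :=
  ∀ i ∈ F, ∀ j ∈ F, G.prodS {i.swap} {j} ⊆ F

/-- The minimal closed set `⟨F⟩` containing `F`. -/
def genClosed (F : Set (ℕ × ℕ)) : Set (ℕ × ℕ) :=
  ⋂₀ {C | F ⊆ C ∧ G.Closed C}

/-- The block `F_J(x)` of the closed set generated by `{Γ_{1,t-1}}_{t ∈ J}`. -/
def block (J : Set ℕ) (x : V) : Set V :=
  {y | tdist G.adj x y ∈ G.genClosed {i | ∃ t ∈ J, i = (1, t - 1)}}

end CTWDR

/-!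
Write `u →r v` for `∂̃(u, v) = r`, and fix `x, y` whose two-way distance lies in both
products. By commutativity there are `a` with `x →j a →e y`, `e ∈ Γ_i^l`, and
`x →j b →j b' →d y`, `d ∈ Γ_i^{l-1}`. Thickness of `Γ_j` turns `x →j b →j b'` into
"every `j`-neighbour of `x` is `j`-related to `b'`", so `a →j b'`. Along an `i`-walk
`a = p₀ → ⋯ → p_l = y` and one of length `l - 1` from `b'` to `y`, thickness of `Γ_i` pulls
`→i` back to `b' →i p₂`. Now `a →j b' →i p₂`; commutativity gives `a →i c →j p₂`, and
thickness once more gives `c →i p₂`, so `i = j`.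
-/

section TwoWayDistance

variable {V : Type*} (adj : V → V → Prop)

lemma ddist_self (x : V) : ddist adj x x = 0 :=
  Nat.sInf_eq_zero.mpr (Or.inl ⟨fun _ => x, rfl, rfl, fun _ h => absurd h (Nat.not_lt_zero _)⟩)

lemma tdist_self (x : V) : tdist adj x x = (0, 0) := by
  simp [tdist, ddist_self]

lemma tdist_swap (x y : V) : tdist adj y x = (tdist adj x y).swap := rfl

end TwoWayDistance

namespace CTWDR

variable {V : Type*} [Fintype V] (G : CTWDR V)

lemma pnum_eq_ncard {x y : V} {h : ℕ × ℕ} (hxy : tdist G.adj x y = h) (i j : ℕ × ℕ) :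
    pnum G.adj h i j = {z : V | tdist G.adj x z = i ∧ tdist G.adj z y = j}.ncard := by
  have hvalues : {n | ∃ x' y' : V, tdist G.adj x' y' = h ∧
      n = {z : V | tdist G.adj x' z = i ∧ tdist G.adj z y' = j}.ncard}
      = {{z : V | tdist G.adj x z = i ∧ tdist G.adj z y = j}.ncard} := by
    ext n
    constructor
    · rintro ⟨x', y', hxy', rfl⟩
      exact G.wdr i j x' y' x y (hxy'.trans hxy.symm)
    · rintro rfl
      exact ⟨x, y, hxy, rfl⟩
  rw [pnum, hvalues, csSup_singleton]

lemma exists_tdist_eq_of_pnum_ne_zero {h i j : ℕ × ℕ} (hp : pnum G.adj h i j ≠ 0) :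
    ∃ x y : V, tdist G.adj x y = h := by
  by_contra! hnone
  apply hp
  have hvalues : {n | ∃ x y : V, tdist G.adj x y = h ∧
      n = {z : V | tdist G.adj x z = i ∧ tdist G.adj z y = j}.ncard} = ∅ :=
    Set.eq_empty_of_forall_notMem fun _ ⟨x, y, hxy, _⟩ => hnone x y hxy
  rw [pnum, hvalues, csSup_empty, Nat.bot_eq_zero]

lemma exists_mid_of_pnum_ne_zero {x y : V} {h i j : ℕ × ℕ} (hxy : tdist G.adj x y = h)
    (hp : pnum G.adj h i j ≠ 0) : ∃ z : V, tdist G.adj x z = i ∧ tdist G.adj z y = j := by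
  rw [G.pnum_eq_ncard hxy] at hp
  exact Set.nonempty_of_ncard_ne_zero hp

lemma pnum_ne_zero_of_mid {x y z : V} {i j : ℕ × ℕ} (hxz : tdist G.adj x z = i)
    (hzy : tdist G.adj z y = j) : pnum G.adj (tdist G.adj x y) i j ≠ 0 := by
  rw [G.pnum_eq_ncard rfl]
  exact Set.ncard_ne_zero_of_mem (a := z) ⟨hxz, hzy⟩

lemma pnum_comm {x y : V} {h : ℕ × ℕ} (hxy : tdist G.adj x y = h) (i j : ℕ × ℕ) :
    pnum G.adj h i j = pnum G.adj h j i := by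
  rw [G.pnum_eq_ncard hxy, G.pnum_eq_ncard hxy, G.comm]

lemma kval_eq_ncard (i : ℕ × ℕ) (x : V) :
    kval G.adj i = {z : V | tdist G.adj x z = i}.ncard := by
  rw [kval, G.pnum_eq_ncard (tdist_self G.adj x)]
  congr 1
  ext z
  simp only [Set.mem_ofPred_eq, and_iff_left_iff_imp]
  intro hxz
  rw [tdist_swap, hxz]

/-- By thickness `p^h_{r,r} ≠ 0` forces `p^h_{r,r} = k_r`: all of `Γ_r(x)` lies in
`Γ_{r*}(y)`. -/
lemma tdist_eq_of_two_step {r : ℕ × ℕ} {x z y z' : V} (hxz : tdist G.adj x z = r)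
    (hzy : tdist G.adj z y = r) (hxz' : tdist G.adj x z' = r) : tdist G.adj z' y = r := by
  have hk : pnum G.adj (tdist G.adj x y) r r = kval G.adj r :=
    (G.thick _ r).1.resolve_left (G.pnum_ne_zero_of_mid hxz hzy)
  have hsub : {w : V | tdist G.adj x w = r ∧ tdist G.adj w y = r}
      ⊆ {w : V | tdist G.adj x w = r} := fun _ hw => hw.1
  have hcard : {w : V | tdist G.adj x w = r}.ncard
      ≤ {w : V | tdist G.adj x w = r ∧ tdist G.adj w y = r}.ncard := by
    rw [← G.pnum_eq_ncard rfl, hk, G.kval_eq_ncard r x]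
  have heq := Set.eq_of_subset_of_ncard_le hsub hcard (Set.toFinite _)
  exact (heq ▸ hxz' : z' ∈ {w : V | tdist G.adj x w = r ∧ tdist G.adj w y = r}).2

lemma tdist_eq_of_two_step' {r : ℕ × ℕ} {a b c b' : V} (hab : tdist G.adj a b = r)
    (hbc : tdist G.adj b c = r) (hb'c : tdist G.adj b' c = r) : tdist G.adj a b' = r := by
  have hcb : tdist G.adj c b = r.swap := by rw [tdist_swap, hbc]
  have hba : tdist G.adj b a = r.swap := by rw [tdist_swap, hab]
  have hcb' : tdist G.adj c b' = r.swap := by rw [tdist_swap, hb'c]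
  rw [tdist_swap, G.tdist_eq_of_two_step hcb hba hcb', Prod.swap_swap]

lemma eq_of_two_step_of_mid {i j : ℕ × ℕ} {a u v w : V} (hau : tdist G.adj a u = i)
    (huw : tdist G.adj u w = i) (hav : tdist G.adj a v = j) (hvw : tdist G.adj v w = i) :
    i = j := by
  have hp := G.pnum_comm rfl j i ▸ G.pnum_ne_zero_of_mid hav hvw
  obtain ⟨c, hac, hcw⟩ := G.exists_mid_of_pnum_ne_zero rfl hp
  exact (G.tdist_eq_of_two_step hau huw hac).symm.trans hcw

def IsWalkIn (r : ℕ × ℕ) (n : ℕ) (p : ℕ → V) : Prop :=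
  ∀ t < n, tdist G.adj (p t) (p (t + 1)) = r

lemma exists_walkIn_of_mem_pow {i e : ℕ × ℕ} {n : ℕ} (he : e ∈ G.pow i (n + 1)) {a y : V}
    (hay : tdist G.adj a y = e) :
    ∃ p : ℕ → V, p 0 = a ∧ p (n + 1) = y ∧ G.IsWalkIn i (n + 1) p := by
  induction n generalizing e y with
  | zero =>
    refine ⟨fun t => if t = 0 then a else y, rfl, rfl, fun t ht => ?_⟩
    obtain rfl : t = 0 := by omega
    exact hay.trans he
  | succ n ih =>
    obtain ⟨d, hd, _, rfl, hp⟩ := he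
    obtain ⟨z, haz, hzy⟩ := G.exists_mid_of_pnum_ne_zero hay hp
    obtain ⟨p, hp0, hpz, hwalk⟩ := ih hd haz
    refine ⟨Function.update p (n + 2) y, by simp [hp0], by simp, fun t ht => ?_⟩
    rcases Nat.lt_or_ge t (n + 1) with ht | ht
    · simp only [Function.update_of_ne (by omega : t ≠ n + 2),
        Function.update_of_ne (by omega : t + 1 ≠ n + 2)]
      exact hwalk t ht
    · obtain rfl : t = n + 1 := by omega
      simpa [hpz] using hzy

/-- Thickness of `Γ_i` pulls `q t →i p (t + 2)` back from the common end to `t = 0`. -/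
lemma tdist_eq_of_walkIn_of_walkIn {i : ℕ × ℕ} {n : ℕ} {p q : ℕ → V}
    (hp : G.IsWalkIn i (n + 2) p) (hq : G.IsWalkIn i (n + 1) q) (hend : q (n + 1) = p (n + 2)) :
    tdist G.adj (q 0) (p 2) = i := by
  induction n generalizing p q with
  | zero => exact hend ▸ hq 0 (by omega)
  | succ n ih =>
    have hshift : tdist G.adj (q 1) (p 3) = i :=
      ih (p := (p <| · + 1)) (q := (q <| · + 1)) (fun t ht => hp (t + 1) (by omega))
        (fun t ht => hq (t + 1) (by omega)) hend
    exact G.tdist_eq_of_two_step' (hq 0 (by omega)) hshift (hp 2 (by omega))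

end CTWDR

theorem stmt0_general {V : Type*} [Fintype V] (G : CTWDR V) (i j : ℕ × ℕ)
    (l : ℕ) (hl : 1 < l)
    (h : (G.prodS (G.pow i l) {j} ∩ G.prodS (G.pow i (l - 1)) (G.pow j 2)).Nonempty) :
    i = j := by
  obtain ⟨k, rfl⟩ : ∃ k, l = k + 2 := ⟨l - 2, by omega⟩
  obtain ⟨h0, ⟨e, he, _, rfl, hpe⟩, ⟨d, hd, g, ⟨_, rfl, _, rfl, hpg⟩, hpd⟩⟩ := h
  obtain ⟨x, y, hxy⟩ := G.exists_tdist_eq_of_pnum_ne_zero hpe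
  obtain ⟨a, hxa, hay⟩ := G.exists_mid_of_pnum_ne_zero hxy (G.pnum_comm hxy e _ ▸ hpe)
  obtain ⟨b', hxb', hb'y⟩ := G.exists_mid_of_pnum_ne_zero hxy (G.pnum_comm hxy d g ▸ hpd)
  obtain ⟨b, hxb, hbb'⟩ := G.exists_mid_of_pnum_ne_zero hxb' hpg
  have hab' := G.tdist_eq_of_two_step hxb hbb' hxa
  obtain ⟨p, rfl, hpy, hp⟩ := G.exists_walkIn_of_mem_pow he hay
  obtain ⟨q, rfl, hqy, hq⟩ := G.exists_walkIn_of_mem_pow (n := k) hd hb'y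
  have hb'p : tdist G.adj (q 0) (p 2) = i :=
    G.tdist_eq_of_walkIn_of_walkIn hp hq (hqy.trans hpy.symm)
  exact G.eq_of_two_step_of_mid (hp 0 (by omega)) (hp 1 (by omega)) hab' hb'p

/-- Lemma 2.1: if `Γ_i^l Γ_j ∩ Γ_i^{l-1} Γ_j^2 ≠ ∅` with `l > 1`, then `i = j`. -/
theorem stmt0 {V : Type*} [Fintype V] (G : CTWDR V) (i j : ℕ × ℕ)
    (hi : Attained G.adj i) (hj : Attained G.adj j) (l : ℕ) (hl : 1 < l)
    (h : (G.prodS (G.pow i l) {j} ∩ G.prodS (G.pow i (l - 1)) (G.pow j 2)).Nonempty) :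
    i = j :=
  stmt0_general G i j l hl h
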